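/- Let $X$ be the stationary Ornstein–Uhlenbeck process with parameters $\theta,\sigma>0$, i.e. the centered Gaussian process with covariance $R_X(s,t) = \frac{\sigma^2}{2\theta}e^{-\theta|t-s|}$. Then $R_X$ has finite 2D $1$-variation on $[0,T]^2$ for every $T>0$. -/
import Mathlib


open Finset Set

noncomputable def rinc (f : ℝ → ℝ → ℝ) (a b c d : ℝ) : ℝ :=
  f b d - f a d - f b c + f a c

def IsDissection (a b : ℝ) (n : ℕ) (u : ℕ → ℝ) : Prop :=
  u 0 = a ∧ u n = b ∧ ∀ i < n, u i < u (i + 1)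

noncomputable def varSums (p : ℝ) (f : ℝ → ℝ → ℝ) (s t u v : ℝ) : Set ℝ :=
  { S | ∃ (n m : ℕ) (a b : ℕ → ℝ), IsDissection s t n a ∧ IsDissection u v m b ∧
      S = ∑ i ∈ range n, ∑ j ∈ range m,
            |rinc f (a i) (a (i + 1)) (b j) (b (j + 1))| ^ p }

private lemma expAff (k e x : ℝ) :
    HasDerivAt (fun s : ℝ => Real.exp (k * s + e)) (k * Real.exp (k * x + e)) x := by
  have h : HasDerivAt (fun s : ℝ => k * s + e) k x := by
    simpa using ((hasDerivAt_id x).const_mul k).add_const e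
  simpa [mul_comm] using h.exp

private lemma hasDerivAt_F (c0 k1 e1 k2 e2 x : ℝ) :
    HasDerivAt (fun s : ℝ => c0 * (Real.exp (k1 * s + e1) - Real.exp (k2 * s + e2)))
      (c0 * (k1 * Real.exp (k1 * x + e1) - k2 * Real.exp (k2 * x + e2))) x :=
  ((expAff k1 e1 x).sub (expAff k2 e2 x)).const_mul c0

private lemma exp_sub_exp_le {x y : ℝ} (hx : x ≤ 0) (hyx : y ≤ x) :
    Real.exp x - Real.exp y ≤ x - y := by
  have h1 : Real.exp x ≤ 1 := Real.exp_le_one_iff.mpr hx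
  have h2 : 1 + (y - x) ≤ Real.exp (y - x) := by linarith [Real.add_one_le_exp (y - x)]
  have h3 : Real.exp y = Real.exp x * Real.exp (y - x) := by rw [← Real.exp_add]; ring_nf
  nlinarith [Real.exp_pos x, Real.exp_pos y]

private lemma mvt_abs {H D : ℝ → ℝ} (Hs : ℝ → ℝ) {p q C : ℝ} (hpq : p ≤ q)
    (hd : ∀ x, HasDerivAt Hs (D x) x)
    (hb : ∀ x ∈ Icc p q, |D x| ≤ C)
    (heq : ∀ x ∈ Icc p q, H x = Hs x) :
    |H q - H p| ≤ C * (q - p) := by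
  have hder : ∀ x ∈ Icc p q, HasDerivWithinAt H (D x) (Icc p q) x := fun x hx =>
    ((hd x).hasDerivWithinAt).congr heq (heq x hx)
  have h := Convex.norm_image_sub_le_of_norm_hasDerivWithin_le hder
    (fun x hx => by rw [Real.norm_eq_abs]; exact hb x hx) (convex_Icc p q)
    (left_mem_Icc.mpr hpq) (right_mem_Icc.mpr hpq)
  rw [Real.norm_eq_abs, Real.norm_eq_abs, abs_of_nonneg (by linarith : (0:ℝ) ≤ q - p)] at h
  exact h

set_option maxHeartbeats 1000000 in
private lemma rinc_bound {θ c0 : ℝ} (hθ : 0 < θ) (hc0 : 0 < c0)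
    {R : ℝ → ℝ → ℝ} (hR : ∀ a b : ℝ, R a b = c0 * Real.exp (-θ * |b - a|))
    {a b c d : ℝ} (hab : a ≤ b) (hcd : c ≤ d) :
    |rinc R a b c d| ≤ c0 * θ ^ 2 * (b - a) * (d - c)
      + 2 * c0 * θ * (min b (max a d) - min b (max a c)) := by
  obtain ⟨a', ha'def⟩ : ∃ a', a' = min b (max a c) := ⟨_, rfl⟩
  obtain ⟨b', hb'def⟩ : ∃ b', b' = min b (max a d) := ⟨_, rfl⟩
  rw [← ha'def, ← hb'def]
  have haa' : a ≤ a' := ha'def ▸ le_min hab (le_max_left _ _)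
  have ha'b' : a' ≤ b' := ha'def ▸ hb'def ▸ min_le_min le_rfl (max_le_max le_rfl hcd)
  have hb'b : b' ≤ b := hb'def ▸ min_le_left _ _
  obtain ⟨H, hH⟩ : ∃ H : ℝ → ℝ, H = fun s => R s d - R s c := ⟨_, rfl⟩
  have hrinc : rinc R a b c d = (H b - H b') + ((H b' - H a') + (H a' - H a)) := by
    simp only [rinc, hH]; ring
  -- Piece 1 : on [a, a'], s ≤ c ≤ d
  have piece1 : |H a' - H a| ≤ c0 * θ ^ 2 * (d - c) * (a' - a) := by
    rcases eq_or_lt_of_le haa' with h | h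
    · rw [← h]; simp
    · have hsc : ∀ s ∈ Icc a a', s ≤ c := by
        intro s hs
        have h1 : a < max a c := lt_of_lt_of_le (ha'def ▸ h) (min_le_right _ _)
        have h4 : a ≤ c := by
          by_contra hx
          push_neg at hx
          rw [max_eq_left hx.le] at h1
          exact absurd h1 (lt_irrefl a)
        have h2 : max a c = c := max_eq_right h4
        have h5 : s ≤ a' := hs.2
        have h6 : a' ≤ max a c := ha'def ▸ min_le_right _ _
        linarith
      refine mvt_abs (fun s => c0 * (Real.exp (θ * s + -θ * d) - Real.exp (θ * s + -θ * c)))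
        haa' (fun x => hasDerivAt_F c0 θ (-θ * d) θ (-θ * c) x) ?_ ?_
      · intro x hx
        have hxc := hsc x hx
        have key := exp_sub_exp_le (x := θ * x + -θ * c) (y := θ * x + -θ * d)
          (by nlinarith) (by nlinarith)
        have hmono : Real.exp (θ * x + -θ * d) ≤ Real.exp (θ * x + -θ * c) :=
          Real.exp_le_exp.mpr (by nlinarith)
        have hmul0 := mul_le_mul_of_nonneg_left hmono (by positivity : (0:ℝ) ≤ c0 * θ)
        have h0 : c0 * (θ * Real.exp (θ * x + -θ * d) - θ * Real.exp (θ * x + -θ * c)) ≤ 0 := by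
          nlinarith
        rw [abs_of_nonpos h0]
        have hmul := mul_le_mul_of_nonneg_left key (by positivity : (0:ℝ) ≤ c0 * θ)
        nlinarith
      · intro x hx
        have hxc := hsc x hx
        simp only [hH]
        rw [hR x d, hR x c, abs_of_nonneg (by linarith : (0:ℝ) ≤ d - x),
          abs_of_nonneg (by linarith : (0:ℝ) ≤ c - x)]
        ring_nf
  -- Piece 3 : on [b', b], d ≤ s
  have piece3 : |H b - H b'| ≤ c0 * θ ^ 2 * (d - c) * (b - b') := by
    rcases eq_or_lt_of_le hb'b with h | h
    · rw [h]; simp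
    · have hsd : ∀ s ∈ Icc b' b, d ≤ s := by
        intro s hs
        rcases min_cases b (max a d) with ⟨h1, h2⟩ | ⟨h1, h2⟩
        · rw [hb'def, h1] at h; exact absurd h (lt_irrefl b)
        · have h3 : d ≤ max a d := le_max_right _ _
          have h4 : b' = max a d := hb'def ▸ h1
          linarith [hs.1]
      refine mvt_abs (fun s => c0 * (Real.exp (-θ * s + θ * d) - Real.exp (-θ * s + θ * c)))
        hb'b (fun x => hasDerivAt_F c0 (-θ) (θ * d) (-θ) (θ * c) x) ?_ ?_
      · intro x hx
        have hxd := hsd x hx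
        have key := exp_sub_exp_le (x := -θ * x + θ * d) (y := -θ * x + θ * c)
          (by nlinarith) (by nlinarith)
        have hmono : Real.exp (-θ * x + θ * c) ≤ Real.exp (-θ * x + θ * d) :=
          Real.exp_le_exp.mpr (by nlinarith)
        have hmul0 := mul_le_mul_of_nonneg_left hmono (by positivity : (0:ℝ) ≤ c0 * θ)
        have h0 : c0 * (-θ * Real.exp (-θ * x + θ * d) - -θ * Real.exp (-θ * x + θ * c)) ≤ 0 := by
          nlinarith
        rw [abs_of_nonpos h0]
        have hmul := mul_le_mul_of_nonneg_left key (by positivity : (0:ℝ) ≤ c0 * θ)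
        nlinarith
      · intro x hx
        have hxd := hsd x hx
        simp only [hH]
        rw [hR x d, hR x c, abs_of_nonpos (by linarith : d - x ≤ (0:ℝ)),
          abs_of_nonpos (by linarith : c - x ≤ (0:ℝ))]
        ring_nf
  -- Piece 2 : on [a', b'], c ≤ s ≤ d
  have piece2 : |H b' - H a'| ≤ 2 * c0 * θ * (b' - a') := by
    rcases eq_or_lt_of_le ha'b' with h | h
    · rw [← h]; simp
    · have hreg : ∀ s ∈ Icc a' b', c ≤ s ∧ s ≤ d := by
        intro s hs
        have hca' : c ≤ a' := by
          rcases min_cases b (max a c) with ⟨h1, h2⟩ | ⟨h1, h2⟩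
          · have h5 : a' = b := by rw [ha'def, h1]
            rw [h5] at h
            linarith [hb'b, h.le]
          · rw [ha'def, h1]
            exact le_max_right _ _
        have hb'd : b' ≤ d := by
          rcases max_cases a d with ⟨h1, h2⟩ | ⟨h1, h2⟩
          · have h3 : b' = a := by rw [hb'def, h1]; exact min_eq_right hab
            rw [h3] at h
            linarith [haa']
          · rw [hb'def, h1]; exact min_le_right _ _
        exact ⟨le_trans hca' hs.1, le_trans hs.2 hb'd⟩
      refine mvt_abs (fun s => c0 * (Real.exp (θ * s + -θ * d) - Real.exp (-θ * s + θ * c)))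
        ha'b' (fun x => hasDerivAt_F c0 θ (-θ * d) (-θ) (θ * c) x) ?_ ?_
      · intro x hx
        obtain ⟨hc, hd⟩ := hreg x hx
        have h1 : Real.exp (θ * x + -θ * d) ≤ 1 := Real.exp_le_one_iff.mpr (by nlinarith)
        have h2 : Real.exp (-θ * x + θ * c) ≤ 1 := Real.exp_le_one_iff.mpr (by nlinarith)
        have h3 := Real.exp_pos (θ * x + -θ * d)
        have h4 := Real.exp_pos (-θ * x + θ * c)
        have m1 := mul_le_mul_of_nonneg_left h1 (by positivity : (0:ℝ) ≤ c0 * θ)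
        have m2 := mul_le_mul_of_nonneg_left h2 (by positivity : (0:ℝ) ≤ c0 * θ)
        have m3 := mul_pos (mul_pos hc0 hθ) h3
        have m4 := mul_pos (mul_pos hc0 hθ) h4
        rw [abs_le]
        constructor <;> nlinarith
      · intro x hx
        obtain ⟨hc, hd⟩ := hreg x hx
        simp only [hH]
        rw [hR x d, hR x c, abs_of_nonneg (by linarith : (0:ℝ) ≤ d - x),
          abs_of_nonpos (by linarith : c - x ≤ (0:ℝ))]
        ring_nf
  -- combine
  have hK : (0:ℝ) ≤ c0 * θ ^ 2 * (d - c) :=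
    mul_nonneg (by positivity) (by linarith)
  have hcomb : c0 * θ ^ 2 * (d - c) * ((a' - a) + (b - b')) ≤ c0 * θ ^ 2 * (d - c) * (b - a) :=
    mul_le_mul_of_nonneg_left (by linarith) hK
  have heq2 : c0 * θ ^ 2 * (d - c) * (b - a) = c0 * θ ^ 2 * (b - a) * (d - c) := by ring
  calc |rinc R a b c d| ≤ |H b - H b'| + (|H b' - H a'| + |H a' - H a|) := by
        rw [hrinc]; exact le_trans (abs_add_le _ _) (by gcongr; exact abs_add_le _ _)
    _ ≤ c0 * θ ^ 2 * (b - a) * (d - c) + 2 * c0 * θ * (b' - a') := by linarith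

private lemma diss_mono {n : ℕ} {u : ℕ → ℝ} (h : ∀ i < n, u i < u (i + 1))
    {i j : ℕ} (hij : i ≤ j) (hj : j ≤ n) : u i ≤ u j := by
  induction j with
  | zero =>
    have : i = 0 := Nat.le_zero.mp hij
    rw [this]
  | succ k ih =>
    rcases Nat.lt_or_ge i (k + 1) with h' | h'
    · exact le_trans (ih (Nat.lt_succ_iff.mp h') (by omega)) (h k (by omega)).le
    · have : i = k + 1 := le_antisymm hij h'
      rw [this]

/-- The covariance `R(s,t) = σ²/(2θ) e^{-θ|t-s|}` of the stationary
Ornstein–Uhlenbeck process has finite 2D 1-variation on `[0,T]²`. -/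
theorem OU_covariance_finite_one_variation
    (θ σ T : ℝ) (hθ : 0 < θ) (hσ : 0 < σ) (hT : 0 < T)
    (R : ℝ → ℝ → ℝ)
    (hR : ∀ a b : ℝ, R a b = σ ^ 2 / (2 * θ) * Real.exp (-θ * |b - a|)) :
    BddAbove (varSums 1 R 0 T 0 T) := by
  set c0 := σ ^ 2 / (2 * θ) with hc0def
  have hc0 : 0 < c0 := by positivity
  refine ⟨c0 * θ ^ 2 * T * T + 2 * c0 * θ * T, ?_⟩
  rintro S ⟨n, m, u, v, ⟨hu0, hun, hui⟩, ⟨hv0, hvm, hvj⟩, rfl⟩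
  simp only [Real.rpow_one]
  have humono := fun {i j} hij hj => diss_mono hui (i := i) (j := j) hij hj
  have hvmono := fun {i j} hij hj => diss_mono hvj (i := i) (j := j) hij hj
  have inner : ∀ i ∈ range n,
      (∑ j ∈ range m, |rinc R (u i) (u (i + 1)) (v j) (v (j + 1))|)
        ≤ c0 * θ ^ 2 * (u (i + 1) - u i) * T + 2 * c0 * θ * (u (i + 1) - u i) := by
    intro i hi
    rw [Finset.mem_range] at hi
    have hui1T : u (i + 1) ≤ T := hun ▸ humono (by omega) (le_refl n)
    have h0ui : 0 ≤ u i := hu0 ▸ humono (Nat.zero_le i) (by omega)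
    have huii : u i ≤ u (i + 1) := (hui i hi).le
    calc (∑ j ∈ range m, |rinc R (u i) (u (i + 1)) (v j) (v (j + 1))|)
        ≤ ∑ j ∈ range m, (c0 * θ ^ 2 * (u (i + 1) - u i) * (v (j + 1) - v j)
            + 2 * c0 * θ * (min (u (i + 1)) (max (u i) (v (j + 1)))
                - min (u (i + 1)) (max (u i) (v j)))) :=
          Finset.sum_le_sum fun j hj =>
            rinc_bound hθ hc0 hR huii (hvj j (Finset.mem_range.mp hj)).le
      _ = c0 * θ ^ 2 * (u (i + 1) - u i) * (v m - v 0)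
            + 2 * c0 * θ * (min (u (i + 1)) (max (u i) (v m))
                - min (u (i + 1)) (max (u i) (v 0))) := by
          rw [Finset.sum_add_distrib, ← Finset.mul_sum, ← Finset.mul_sum,
            Finset.sum_range_sub (fun j => v j),
            Finset.sum_range_sub (fun j => min (u (i + 1)) (max (u i) (v j)))]
      _ = c0 * θ ^ 2 * (u (i + 1) - u i) * T + 2 * c0 * θ * (u (i + 1) - u i) := by
          rw [hvm, hv0]
          have e1 : max (u i) T = T := max_eq_right (le_trans huii hui1T)
          have e2 : max (u i) (0 : ℝ) = u i := max_eq_left h0ui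
          rw [e1, e2, min_eq_left hui1T, min_eq_right huii]
          ring
  calc (∑ i ∈ range n, ∑ j ∈ range m, |rinc R (u i) (u (i + 1)) (v j) (v (j + 1))|)
      ≤ ∑ i ∈ range n,
          (c0 * θ ^ 2 * (u (i + 1) - u i) * T + 2 * c0 * θ * (u (i + 1) - u i)) :=
        Finset.sum_le_sum inner
    _ = ∑ i ∈ range n, (c0 * θ ^ 2 * T + 2 * c0 * θ) * (u (i + 1) - u i) := by
        refine Finset.sum_congr rfl fun i _ => by ring
    _ = (c0 * θ ^ 2 * T + 2 * c0 * θ) * (u n - u 0) := by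
        rw [← Finset.mul_sum, Finset.sum_range_sub (fun i => u i)]
    _ = c0 * θ ^ 2 * T * T + 2 * c0 * θ * T := by rw [hun, hu0]; ring
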